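/- arXiv:2401.07594 — 5 statements merged into one kernel-verified Lean document; each statement's English description precedes it below -/
import Mathlib

section
/- Let 𝕂 ∈ {ℝ, ℂ} and let X be a normed space over 𝕂 whose density character dens(X) equals κ, where κ ≥ ℵ₀ is a regular cardinal. Let UWD_κ denote the set of all κ-sequences (x_α)_{α<κ} in X such that (i) the set {‖x_α‖ : α < κ} is unbounded, and (ii) the set {x_α : α < κ} is dense in X for the weak topology σ(X,X*). Then UWD_κ is κ⁺-lineable as a subset of the vector space X^κ. -/
open Cardinal

universe u

/-- The density character of a topological space: the least cardinality of a dense subset. -/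
noncomputable def densityCharacter (X : Type u) [TopologicalSpace X] : Cardinal.{u} :=
  sInf { c : Cardinal.{u} | ∃ s : Set X, Dense s ∧ Cardinal.mk s = c }

/-- The weak topology `σ(X, X*)` on a normed space `X` over `𝕜`: the initial topology induced
by all continuous linear functionals on `X`. -/
noncomputable def weakTopology (𝕜 : Type) (X : Type u) [RCLike 𝕜]
    [NormedAddCommGroup X] [NormedSpace 𝕜 X] : TopologicalSpace X :=
  ⨅ φ : X →L[𝕜] 𝕜, TopologicalSpace.induced φ inferInstance

/-!
Fix a norm-dense family `z : κ → X` and a bijection `e : κ ≃ κ × κ`. For a scalar family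
`g : κ → 𝕜`, the κ-sequence `α ↦ g i • z j`, where `e α = (i, j)`, runs through `g i • range z`
for every `i`; if `g ≠ 0` this contains a dilate of a dense set, which is norm-dense, hence
unbounded and weakly dense. The map `g ↦ (α ↦ g i • z j)` is linear and injective, and
`𝕜^κ` has dimension `|𝕜|^κ ≥ 2^κ ≥ κ⁺`, so its image contains a subspace of dimension `κ⁺`.
-/

open scoped Pointwise

section DensityCharacter

variable {X : Type u} [TopologicalSpace X]

lemma densityCharacter_le_mk : densityCharacter X ≤ #X :=
  csInf_le' ⟨Set.univ, dense_univ, Cardinal.mk_univ⟩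

lemma exists_denseRange_of_mk_eq_densityCharacter {ι : Type u}
    (h : #ι = densityCharacter X) : ∃ z : ι → X, DenseRange z := by
  have hne : {c : Cardinal.{u} | ∃ s : Set X, Dense s ∧ #s = c}.Nonempty :=
    ⟨#X, Set.univ, dense_univ, Cardinal.mk_univ⟩
  obtain ⟨s, hs, hsc⟩ : ∃ s : Set X, Dense s ∧ #s = densityCharacter X := csInf_mem hne
  obtain ⟨e⟩ : Nonempty (ι ≃ s) := Cardinal.eq.mp (h.trans hsc.symm)
  refine ⟨Subtype.val ∘ e, ?_⟩
  rwa [DenseRange, Set.range_comp, e.range_eq_univ, Set.image_univ, Subtype.range_coe]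

end DensityCharacter

lemma Dense.dense_weakTopology {𝕜 : Type} [RCLike 𝕜] {X : Type u} [NormedAddCommGroup X]
    [NormedSpace 𝕜 X] {S : Set X} (hS : Dense S) : @Dense X (weakTopology 𝕜 X) S := by
  have hle : (inferInstance : TopologicalSpace X) ≤ weakTopology 𝕜 X :=
    le_iInf fun φ => continuous_iff_le_induced.mp φ.continuous
  have h := @DenseRange.dense_image X X _ (weakTopology 𝕜 X) S id
    (@denseRange_id X (weakTopology 𝕜 X)) (continuous_id_of_le hle) hS
  rwa [Set.image_id] at h

lemma DenseRange.not_exists_norm_le (𝕜 : Type*) [NontriviallyNormedField 𝕜] {E ι : Type*}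
    [NormedAddCommGroup E] [NormedSpace 𝕜 E] [Nontrivial E] {x : ι → E} (hx : DenseRange x) :
    ¬ ∃ C : ℝ, ∀ i, ‖x i‖ ≤ C := by
  rintro ⟨C, hC⟩
  have hbdd : Bornology.IsBounded (Set.range x) :=
    isBounded_iff_forall_norm_le.mpr ⟨C, Set.forall_mem_range.mpr hC⟩
  exact NormedSpace.unbounded_univ 𝕜 E (by simpa [hx.closure_eq] using hbdd.closure)

lemma DenseRange.exists_ne_zero {X ι : Type*} [TopologicalSpace X] [T1Space X] [Zero X]
    [Nontrivial X] {z : ι → X} (hz : DenseRange z) : ∃ j, z j ≠ 0 := by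
  by_contra! h
  have huniv := (closure_mono (Set.range_subset_iff.mpr h)).trans_eq closure_singleton
  rw [hz.closure_eq] at huniv
  obtain ⟨x, hx⟩ := exists_ne (0 : X)
  exact hx (huniv (Set.mem_univ x))

lemma Dense.smul₀ {G₀ α : Type*} [GroupWithZero G₀] [MulAction G₀ α] [TopologicalSpace α]
    [ContinuousConstSMul G₀ α] {c : G₀} (hc : c ≠ 0) {s : Set α} (hs : Dense s) :
    Dense (c • s) := by
  rw [dense_iff_closure_eq, closure_smul₀' hc, hs.closure_eq, Set.smul_set_univ₀ hc]

lemma lift_mk_lt_rank_fun {K : Type u} {ι : Type*} [DivisionRing K] [Infinite ι] :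
    Cardinal.lift.{u} #ι < Module.rank K (ι → K) := by
  rw [rank_fun_infinite, Cardinal.mk_arrow]
  calc Cardinal.lift.{u} #ι < 2 ^ Cardinal.lift.{u} #ι := Cardinal.cantor _
    _ ≤ _ := Cardinal.power_le_power_right <| by
        simpa using Cardinal.lift_le.{u}.mpr (Cardinal.two_le_iff.mpr ⟨(0 : K), 1, zero_ne_one⟩)

lemma exists_submodule_rank_eq {K V : Type*} [DivisionRing K] [AddCommGroup V] [Module K V]
    {c : Cardinal} (hc : c ≤ Module.rank K V) : ∃ W : Submodule K V, Module.rank K W = c := by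
  obtain ⟨s, rfl, hs⟩ := le_rank_iff_exists_linearIndependent.mp hc
  exact ⟨Submodule.span K s, rank_span_set hs⟩

section OuterSmul

variable {K M σ ι τ : Type*} [DivisionRing K] [AddCommGroup M] [Module K M]

def outerSmul (e : τ ≃ σ × ι) (z : ι → M) : (σ → K) →ₗ[K] (τ → M) where
  toFun g t := g (e t).1 • z (e t).2
  map_add' g g' := by ext t; simp [add_smul]
  map_smul' c g := by ext t; simp [mul_smul]

@[simp]
lemma outerSmul_apply (e : τ ≃ σ × ι) (z : ι → M) (g : σ → K) (t : τ) :
    outerSmul e z g t = g (e t).1 • z (e t).2 := rfl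

lemma smul_range_subset_range_outerSmul (e : τ ≃ σ × ι) (z : ι → M) (g : σ → K) (i : σ) :
    g i • Set.range z ⊆ Set.range (outerSmul e z g) := by
  rintro _ ⟨_, ⟨j, rfl⟩, rfl⟩
  exact ⟨e.symm (i, j), by simp⟩

lemma outerSmul_injective (e : τ ≃ σ × ι) {z : ι → M} {j : ι} (hj : z j ≠ 0) :
    Function.Injective (outerSmul (K := K) e z) := by
  refine (injective_iff_map_eq_zero _).mpr fun g hg => funext fun i => ?_
  have := congrFun hg (e.symm (i, j))
  exact (smul_eq_zero.mp (by simpa using this)).resolve_right hj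

lemma denseRange_outerSmul [TopologicalSpace M] [ContinuousConstSMul K M] (e : τ ≃ σ × ι)
    {z : ι → M} (hz : DenseRange z) {g : σ → K} (hg : g ≠ 0) :
    DenseRange (outerSmul e z g) := by
  obtain ⟨i, hi⟩ := Function.ne_iff.mp hg
  exact (hz.smul₀ hi).mono (smul_range_subset_range_outerSmul e z g i)

end OuterSmul

/-- Let `𝕜 ∈ {ℝ, ℂ}` and let `X` be a normed space over `𝕜` whose density
character equals `κ`, where `κ ≥ ℵ₀` is a regular cardinal.  The set `UWD_κ` of all
`κ`-sequences `(x_α)_{α < κ}` in `X` (functions from the ordinals below `κ` to `X`) such that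
`{‖x α‖ : α < κ}` is unbounded and `{x α : α < κ}` is dense in the weak topology `σ(X, X*)`,
is `κ⁺`-lineable in `X ^ κ`. -/
theorem statement2 (𝕜 : Type) [RCLike 𝕜] (X : Type u)
    [NormedAddCommGroup X] [NormedSpace 𝕜 X]
    (κ : Cardinal.{u}) (hreg : κ.IsRegular)
    (hdens : densityCharacter X = κ) :
    ∃ W : Submodule 𝕜 (κ.ord.ToType → X),
      Module.rank 𝕜 ↥W = Order.succ κ ∧
      ∀ x ∈ W, x ≠ 0 →
        (¬ ∃ C : ℝ, ∀ α : κ.ord.ToType, ‖x α‖ ≤ C) ∧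
        @Dense X (weakTopology 𝕜 X) (Set.range x) := by
  set T := κ.ord.ToType
  have hT : #T = κ := Cardinal.mk_ord_toType κ
  have hκ : ℵ₀ ≤ κ := hreg.aleph0_le
  have : Infinite T := Cardinal.aleph0_le_mk_iff.mp (hT ▸ hκ)
  have : Nontrivial X := by
    have : Infinite X := Cardinal.aleph0_le_mk_iff.mp (hκ.trans (hdens ▸ densityCharacter_le_mk))
    infer_instance
  obtain ⟨z, hz⟩ := exists_denseRange_of_mk_eq_densityCharacter (hT.trans hdens.symm)
  obtain ⟨j, hj⟩ := hz.exists_ne_zero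
  obtain ⟨e⟩ : Nonempty (T ≃ T × T) := by
    rw [← Cardinal.eq, Cardinal.mk_prod, Cardinal.lift_id, hT, Cardinal.mul_eq_self hκ]
  have hrank : Order.succ κ ≤ Module.rank 𝕜 (T → 𝕜) :=
    Order.succ_le_of_lt (by simpa [hT] using lift_mk_lt_rank_fun (K := 𝕜) (ι := T))
  obtain ⟨V, hV⟩ := exists_submodule_rank_eq hrank
  refine ⟨V.map (outerSmul e z), by rw [rank_map_eq (outerSmul_injective e hj), hV], ?_⟩
  rintro _ ⟨g, -, rfl⟩ hx
  have hdense := denseRange_outerSmul e hz (fun hg : g = 0 => hx (by rw [hg, map_zero]))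
  exact ⟨hdense.not_exists_norm_le 𝕜, hdense.dense_weakTopology⟩
end

section
/- Let 𝕂 ∈ {ℝ, ℂ} and let X be a nonzero separable Banach space over 𝕂. Then the set of all sequences (x_n)_{n∈ℕ} in X such that (a) the set {‖x_n‖ : n ∈ ℕ} is unbounded and (b) the set {x_n : n ∈ ℕ} is dense in X for the weak topology σ(X,X*), is 𝔠-lineable as a subset of the vector space X^ℕ. -/
/-!
Fix a dense sequence `u` in `X` and, for each real `t > 1`, let `v t` be the sequence
`(t ^ k • u m)` indexed by the pairs `(k, m) ∈ ℕ × ℕ`. A nonzero combination `∑ c t • v t` is the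
sequence `(s k • u m)` with `s k = ∑ c t * t ^ k`; since the bases are distinct and exceed `1`, the
term of largest base dominates and `‖s k‖ → ∞`. Hence the combination is unbounded, and for any `k`
with `s k ≠ 0` it contains the dense set `s k • range u`, which is a fortiori weakly dense.
In particular the `v t` are linearly independent, so they span a space of dimension `𝔠`.
-/

open Cardinal

universe u

open Filter Function Set Topology

theorem dense_weakTopology_of_dense {𝕜 : Type} [RCLike 𝕜] {X : Type u} [NormedAddCommGroup X]
    [NormedSpace 𝕜 X] {s : Set X} (hs : Dense s) : @Dense X (weakTopology 𝕜 X) s := by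
  have hle : (inferInstance : TopologicalSpace X) ≤ weakTopology 𝕜 X :=
    le_iInf fun φ => continuous_iff_le_induced.1 φ.continuous
  exact fun x => closure.mono hle (hs x)

theorem DenseRange.exists_ne {X α : Type*} [TopologicalSpace X] [T1Space X] [Nontrivial X]
    {u : α → X} (hu : DenseRange u) (a : X) : ∃ i, u i ≠ a := by
  by_contra! h
  obtain ⟨x, hx⟩ := _root_.exists_ne a
  have hsub : range u ⊆ {a} := by rintro _ ⟨i, rfl⟩; exact h i
  exact hx (closure_minimal hsub isClosed_singleton (hu x))

theorem tendsto_norm_finsupp_sum_mul_pow_atTop {𝕜 ι : Type*} [NormedField 𝕜] {b : ι → 𝕜}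
    (hb : Injective (‖b ·‖)) (hb1 : ∀ i, 1 < ‖b i‖) {c : ι →₀ 𝕜} (hc : c ≠ 0) :
    Tendsto (fun k : ℕ => ‖c.sum fun i a => a * b i ^ k‖) atTop atTop := by
  classical
  obtain ⟨i₀, hi₀, hmax⟩ :=
    c.support.exists_max_image (‖b ·‖) (Finsupp.support_nonempty_iff.2 hc)
  have hb₀ : b i₀ ≠ 0 := norm_pos_iff.1 (one_pos.trans (hb1 i₀))
  have hterm : ∀ i ∈ c.support, Tendsto (fun k : ℕ => c i * (b i / b i₀) ^ k) atTop
      (𝓝 (if i = i₀ then c i₀ else 0)) := by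
    intro i hi
    by_cases h : i = i₀
    · subst h
      simp [div_self hb₀]
    · have hlt : ‖b i / b i₀‖ < 1 := by
        rw [norm_div, div_lt_one (norm_pos_iff.2 hb₀)]
        exact (hmax i hi).lt_of_ne fun he => h (hb he)
      simpa [h] using (tendsto_pow_atTop_nhds_zero_of_norm_lt_one hlt).const_mul (c i)
  have hlim : Tendsto (fun k : ℕ => c.sum fun i a => a * (b i / b i₀) ^ k) atTop (𝓝 (c i₀)) := by
    simpa [Finsupp.sum, hi₀] using tendsto_finsetSum _ hterm
  refine ((hlim.norm.pos_mul_atTop (norm_pos_iff.2 (Finsupp.mem_support_iff.1 hi₀))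
    (tendsto_pow_atTop_atTop_of_one_lt (hb1 i₀)))).congr fun k => ?_
  rw [← norm_pow, ← norm_mul, Finsupp.sum, Finsupp.sum, Finset.sum_mul]
  congr 1
  refine Finset.sum_congr rfl fun i _ => ?_
  rw [div_pow, mul_assoc, div_mul_cancel₀ _ (pow_ne_zero k hb₀)]

section PairedSequences

variable {𝕜 X : Type*} [NormedField 𝕜] [NormedAddCommGroup X] [NormedSpace 𝕜 X]
  {u : ℕ → X} {s : ℕ → 𝕜}

theorem not_exists_norm_smul_unpair_le (hs : Tendsto (‖s ·‖) atTop atTop) {m : ℕ}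
    (hu : u m ≠ 0) : ¬ ∃ C : ℝ, ∀ n : ℕ, ‖s n.unpair.1 • u n.unpair.2‖ ≤ C := by
  rintro ⟨C, hC⟩
  obtain ⟨k, hk⟩ := ((hs.atTop_mul_const (norm_pos_iff.2 hu)).eventually_gt_atTop C).exists
  have := hC (Nat.pair k m)
  rw [Nat.unpair_pair, norm_smul] at this
  exact (hk.trans_le this).false

theorem DenseRange.smul_unpair (hu : DenseRange u) {k : ℕ} (hs : s k ≠ 0) :
    DenseRange fun n : ℕ => s n.unpair.1 • u n.unpair.2 := by
  have hdense : DenseRange ((s k • ·) ∘ u) :=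
    (Homeomorph.smulOfNeZero _ hs).surjective.denseRange.comp hu (continuous_const_smul _)
  refine Dense.mono ?_ hdense
  rintro _ ⟨m, rfl⟩
  exact ⟨Nat.pair k m, by simp⟩

def powSmulSeq (b : 𝕜) (u : ℕ → X) : ℕ → X := fun n => b ^ n.unpair.1 • u n.unpair.2

theorem finsupp_sum_smul_powSmulSeq {ι : Type*} (b : ι → 𝕜) (c : ι →₀ 𝕜) :
    (c.sum fun i a => a • powSmulSeq (b i) u) =
      fun n => (c.sum fun i a => a * b i ^ n.unpair.1) • u n.unpair.2 := by
  ext n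
  simp [powSmulSeq, Finsupp.sum, Finset.sum_apply, Finset.sum_smul, smul_smul]

variable {ι : Type*} {b : ι → 𝕜}

theorem linearIndependent_powSmulSeq (hb : Injective (‖b ·‖)) (hb1 : ∀ i, 1 < ‖b i‖) {m : ℕ}
    (hu : u m ≠ 0) :
    LinearIndependent 𝕜 fun i => powSmulSeq (b i) u := by
  rw [linearIndependent_iff]
  intro c hc
  by_contra hc0
  obtain ⟨k, hk⟩ :=
    ((tendsto_norm_finsupp_sum_mul_pow_atTop hb hb1 hc0).eventually_gt_atTop 0).exists
  have hzero := congrFun hc (Nat.pair k m)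
  simp only [Finsupp.linearCombination_apply, finsupp_sum_smul_powSmulSeq, Nat.unpair_pair,
    Pi.zero_apply] at hzero
  exact smul_ne_zero (norm_pos_iff.1 hk) hu hzero

theorem unbounded_and_denseRange_finsupp_sum_smul_powSmulSeq (hb : Injective (‖b ·‖))
    (hb1 : ∀ i, 1 < ‖b i‖) (hu : DenseRange u) {m : ℕ} (hum : u m ≠ 0) {c : ι →₀ 𝕜} (hc : c ≠ 0) :
    (¬ ∃ C : ℝ, ∀ n : ℕ, ‖(c.sum fun i a => a • powSmulSeq (b i) u) n‖ ≤ C) ∧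
      DenseRange (c.sum fun i a => a • powSmulSeq (b i) u) := by
  set s : ℕ → 𝕜 := fun k => c.sum fun i a => a * b i ^ k
  have hs : Tendsto (‖s ·‖) atTop atTop := tendsto_norm_finsupp_sum_mul_pow_atTop hb hb1 hc
  obtain ⟨k, hk⟩ := (hs.eventually_gt_atTop 0).exists
  rw [finsupp_sum_smul_powSmulSeq]
  exact ⟨not_exists_norm_smul_unpair_le hs hum, hu.smul_unpair (norm_pos_iff.1 hk)⟩

end PairedSequences

theorem statement4_general (𝕜 : Type) [RCLike 𝕜] (X : Type u)
    [NormedAddCommGroup X] [NormedSpace 𝕜 X] [Nontrivial X]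
    [TopologicalSpace.SeparableSpace X] :
    ∃ W : Submodule 𝕜 (ℕ → X),
      Module.rank 𝕜 ↥W = Cardinal.lift.{u} Cardinal.continuum ∧
      ∀ x ∈ W, x ≠ 0 →
        (¬ ∃ C : ℝ, ∀ n : ℕ, ‖x n‖ ≤ C) ∧
        @Dense X (weakTopology 𝕜 X) (Set.range x) := by
  obtain ⟨u, hu⟩ := TopologicalSpace.exists_dense_seq X
  obtain ⟨m, hum⟩ := hu.exists_ne 0
  let b : Ioi (1 : ℝ) → 𝕜 := fun t => (t : ℝ)
  have hnorm : ∀ t, ‖b t‖ = t := fun t => by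
    simp [b, abs_of_pos (one_pos.trans (mem_Ioi.1 t.2))]
  have hb : Injective (‖b ·‖) := fun t t' h => Subtype.ext (by simpa [hnorm] using h)
  have hb1 : ∀ t, 1 < ‖b t‖ := fun t => (hnorm t).symm ▸ t.2
  have hli := linearIndependent_powSmulSeq hb hb1 hum
  refine ⟨Submodule.span 𝕜 (range fun t => powSmulSeq (b t) u), ?_, fun x hx hx0 => ?_⟩
  · rw [rank_span hli, ← lift_id'.{0, u} #(range _), mk_range_eq_of_injective hli.injective,
      mk_Ioi_real, lift_continuum, lift_continuum]
  · obtain ⟨c, rfl⟩ := Finsupp.mem_span_range_iff_exists_finsupp.1 hx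
    have hc : c ≠ 0 := by rintro rfl; simp at hx0
    obtain ⟨hunb, hdense⟩ :=
      unbounded_and_denseRange_finsupp_sum_smul_powSmulSeq hb hb1 hu hum hc
    exact ⟨hunb, dense_weakTopology_of_dense hdense⟩

/-- Let `𝕜 ∈ {ℝ, ℂ}` and let `X` be a nonzero separable Banach space over
`𝕜`.  The set of all sequences `(x n)_{n ∈ ℕ}` in `X` such that `{‖x n‖ : n ∈ ℕ}` is
unbounded and `{x n : n ∈ ℕ}` is dense in the weak topology `σ(X, X*)` is `𝔠`-lineable
in `X ^ ℕ`. -/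
theorem statement4 (𝕜 : Type) [RCLike 𝕜] (X : Type u)
    [NormedAddCommGroup X] [NormedSpace 𝕜 X] [CompleteSpace X] [Nontrivial X]
    [TopologicalSpace.SeparableSpace X] :
    ∃ W : Submodule 𝕜 (ℕ → X),
      Module.rank 𝕜 ↥W = Cardinal.lift.{u} Cardinal.continuum ∧
      ∀ x ∈ W, x ≠ 0 →
        (¬ ∃ C : ℝ, ∀ n : ℕ, ‖x n‖ ≤ C) ∧
        @Dense X (weakTopology 𝕜 X) (Set.range x) :=
  statement4_general 𝕜 X
end

section
/- Let 𝕂 ∈ {ℝ, ℂ} and let X be a nonzero normed space over 𝕂. Let 𝒻 denote the family of finite subsets of ℕ directed by inclusion, and for a sequence (x_n)_{n∈ℕ} in X and F ∈ 𝒻 set x_F := ∑_{n∈F} x_n. Then the set of all sequences (x_n)_{n∈ℕ} in X such that the series ∑_{n=1}^∞ x_n converges (i.e., the sequence of partial sums ∑_{n≤N} x_n converges in X as N → ∞) but the net (x_F)_{F∈𝒻} diverges (i.e., there is no x ∈ X with lim_{F∈𝒻} x_F = x; equivalently, the family (x_n) is not summable), is 𝔠-lineable as a subset of the vector space X^ℕ.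 -/
/-!
For `t ∈ (0, 1)` the series of `n ↦ (-1)ⁿ (n + 1)⁻ᵗ • e` converges by the Leibniz criterion.
A nonzero combination `∑ cᵢ (-1)ⁿ (n + 1)^(-tᵢ) • e` has scalar coefficients asymptotic to the
term of smallest exponent `t₀ ≤ 1`, hence not summable in `𝕜`; since the sequence lies on the
line `𝕜 • e`, a functional with `φ e ≠ 0` shows that it is not summable in `X` either. As the zero
sequence is summable, the same fact gives linear independence of these `𝔠` sequences.
-/

open Filter Topology Asymptotics Finset

theorem isLittleO_rpow_rpow_atTop {a b : ℝ} (hab : a < b) :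
    (fun x : ℝ => x ^ a) =o[atTop] fun x => x ^ b := by
  have hpos : ∀ᶠ x : ℝ in atTop, 0 < x := eventually_gt_atTop 0
  rw [isLittleO_iff_tendsto' (hpos.mono fun x hx h => absurd h (Real.rpow_pos_of_pos hx b).ne')]
  refine (tendsto_rpow_neg_atTop (sub_pos.2 hab)).congr' ?_
  filter_upwards [hpos] with x hx
  rw [neg_sub, ← Real.rpow_sub hx]

variable {𝕜 ι : Type*} [RCLike 𝕜]

theorem isEquivalent_sum_rpow_neg {T : Finset ι} {p : ι → ℝ} (hp : Set.InjOn p T)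
    {c : ι → 𝕜} {i₀ : ι} (hi₀ : i₀ ∈ T) (hmin : ∀ i ∈ T, p i₀ ≤ p i) (hc : c i₀ ≠ 0) :
    (fun x : ℝ => ∑ i ∈ T, c i * ((x ^ (-p i) : ℝ) : 𝕜)) ~[atTop]
      fun x => c i₀ * ((x ^ (-p i₀) : ℝ) : 𝕜) := by
  classical
  have hlower : ∀ i ∈ T.erase i₀, (fun x : ℝ => c i * ((x ^ (-p i) : ℝ) : 𝕜)) =o[atTop]
      fun x => c i₀ * ((x ^ (-p i₀) : ℝ) : 𝕜) := by
    intro i hi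
    obtain ⟨hne, hiT⟩ := Finset.mem_erase.1 hi
    have hlt : -p i < -p i₀ :=
      neg_lt_neg ((hmin i hiT).lt_of_ne fun h => hne (hp hiT hi₀ h.symm))
    refine (IsLittleO.const_mul_left ?_ _).const_mul_right hc
    rw [← isLittleO_norm_norm]
    simpa only [RCLike.norm_ofReal, ← Real.norm_eq_abs, isLittleO_norm_norm] using
      isLittleO_rpow_rpow_atTop hlt
  refine (IsLittleO.sum hlower).congr_left fun x => ?_
  simp [← Finset.add_sum_erase T _ hi₀]

theorem not_summable_nat_add_one_rpow_neg {t : ℝ} (ht : t ≤ 1) :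
    ¬ Summable fun n : ℕ => ((n : ℝ) + 1) ^ (-t) := by
  intro h
  have h' : Summable fun n : ℕ => ((n + 1 : ℕ) : ℝ) ^ (-t) := by exact_mod_cast h
  linarith [Real.summable_nat_rpow.1 ((summable_nat_add_iff 1).1 h')]

theorem not_summable_sum_rpow_neg {T : Finset ι} (hT : T.Nonempty) {p : ι → ℝ}
    (hp : Set.InjOn p T) (hp1 : ∀ i ∈ T, p i ≤ 1) {c : ι → 𝕜} (hc : ∀ i ∈ T, c i ≠ 0) :
    ¬ Summable fun n : ℕ => ∑ i ∈ T, c i * ((((n : ℝ) + 1) ^ (-p i) : ℝ) : 𝕜) := by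
  intro hsum
  obtain ⟨i₀, hi₀, hmin⟩ := T.exists_min_image p hT
  have hequiv := (isEquivalent_sum_rpow_neg hp hi₀ hmin (hc i₀ hi₀)).comp_tendsto
    (tendsto_atTop_add_const_right _ 1 tendsto_natCast_atTop_atTop)
  have hlead := summable_of_isBigO_nat' hsum hequiv.isBigO_symm
  rw [Function.comp_def, summable_mul_left_iff (hc i₀ hi₀), RCLike.summable_ofReal] at hlead
  exact not_summable_nat_add_one_rpow_neg (hp1 i₀ hi₀) hlead

theorem summable_smul_const_iff {α X : Type*} [NormedAddCommGroup X] [NormedSpace 𝕜 X]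
    {a : α → 𝕜} {e : X} (he : e ≠ 0) : Summable (fun n => a n • e) ↔ Summable a := by
  refine ⟨fun h => ?_, fun h => h.smul_const e⟩
  obtain ⟨φ, -, hφe⟩ := exists_dual_vector 𝕜 e (norm_ne_zero_iff.2 he)
  have hφe0 : φ e ≠ 0 := by rw [hφe]; exact_mod_cast norm_ne_zero_iff.2 he
  have := h.map φ.toLinearMap φ.continuous
  simp only [Function.comp_def, map_smul, smul_eq_mul] at this
  exact (summable_mul_right_iff hφe0).1 this

section Series

variable (𝕜 X : Type*) [Semiring 𝕜] [AddCommMonoid X] [TopologicalSpace X] [ContinuousAdd X]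
  [Module 𝕜 X] [ContinuousConstSMul 𝕜 X]

def convergentSeries : Submodule 𝕜 (ℕ → X) where
  carrier := {x | ∃ s, Tendsto (fun N => ∑ n ∈ range N, x n) atTop (𝓝 s)}
  add_mem' := by
    rintro x y ⟨s, hs⟩ ⟨t, ht⟩
    exact ⟨s + t, by simpa only [Pi.add_apply, sum_add_distrib] using hs.add ht⟩
  zero_mem' := ⟨0, by simpa using tendsto_const_nhds⟩
  smul_mem' := by
    rintro a x ⟨s, hs⟩
    exact ⟨a • s, by simpa only [Pi.smul_apply, ← smul_sum] using hs.const_smul a⟩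

end Series

section AltPow

variable (𝕜) {X : Type*} [NormedAddCommGroup X] [NormedSpace 𝕜 X]

noncomputable def altPowSeq (e : X) (t : ℝ) : ℕ → X :=
  fun n => (((-1) ^ n * ((n : ℝ) + 1) ^ (-t) : ℝ) : 𝕜) • e

variable {𝕜}

theorem altPowSeq_mem_convergentSeries (e : X) {t : ℝ} (ht : 0 < t) :
    altPowSeq 𝕜 e t ∈ convergentSeries 𝕜 X := by
  have hanti : Antitone fun n : ℕ => ((n : ℝ) + 1) ^ (-t) := fun m n hmn =>
    Real.rpow_le_rpow_of_nonpos (by positivity) (by gcongr) (neg_nonpos.2 ht.le)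
  obtain ⟨l, hl⟩ := hanti.tendsto_alternating_series_of_tendsto_zero
    ((tendsto_rpow_neg_atTop ht).comp
      (tendsto_atTop_add_const_right _ 1 tendsto_natCast_atTop_atTop))
  refine ⟨(l : 𝕜) • e, ?_⟩
  have hcont : Continuous fun r : ℝ => (r : 𝕜) • e := RCLike.continuous_ofReal.smul continuous_const
  simpa only [altPowSeq, ← sum_smul, Function.comp_def, RCLike.ofReal_sum] using
    (hcont.tendsto l).comp hl

theorem finsupp_sum_smul_altPowSeq_apply (e : X) (c : ι →₀ 𝕜) (p : ι → ℝ) (n : ℕ) :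
    (c.sum fun i a => a • altPowSeq 𝕜 e (p i)) n =
      ((-1) ^ n * ∑ i ∈ c.support, c i * ((((n : ℝ) + 1) ^ (-p i) : ℝ) : 𝕜)) • e := by
  simp only [Finsupp.sum, Finset.sum_apply, Pi.smul_apply, altPowSeq, smul_smul, mul_sum, sum_smul]
  refine sum_congr rfl fun i _ => ?_
  push_cast
  ring_nf

theorem not_summable_finsupp_sum_smul_altPowSeq {e : X} (he : e ≠ 0) {p : ι → ℝ}
    (hp : Function.Injective p) (hp1 : ∀ i, p i ≤ 1) {c : ι →₀ 𝕜} (hc : c ≠ 0) :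
    ¬ Summable (c.sum fun i a => a • altPowSeq 𝕜 e (p i)) := by
  rw [funext (finsupp_sum_smul_altPowSeq_apply e c p), summable_smul_const_iff he,
    ← summable_norm_iff]
  simp only [norm_mul, norm_pow, norm_neg, norm_one, one_pow, one_mul, summable_norm_iff]
  exact not_summable_sum_rpow_neg (Finsupp.support_nonempty_iff.2 hc) hp.injOn
    (fun i _ => hp1 i) fun i => Finsupp.mem_support_iff.1

theorem linearIndependent_altPowSeq {e : X} (he : e ≠ 0) {p : ι → ℝ}
    (hp : Function.Injective p) (hp1 : ∀ i, p i ≤ 1) :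
    LinearIndependent 𝕜 fun i => altPowSeq 𝕜 e (p i) := by
  refine linearIndependent_iff.2 fun c hc => ?_
  by_contra hc0
  rw [Finsupp.linearCombination_apply] at hc
  exact not_summable_finsupp_sum_smul_altPowSeq he hp hp1 hc0 (hc ▸ summable_zero)

end AltPow

/-- Let `𝕜 ∈ {ℝ, ℂ}` and let `X` be a nonzero normed space over `𝕜`.
The set of all sequences `(x n)_{n ∈ ℕ}` in `X` such that the series `∑ x n` converges
(the partial sums converge in `X`) but the net `(∑_{n ∈ F} x n)_{F ∈ 𝒻}`, indexed by the
finite subsets of `ℕ` directed by inclusion, diverges (equivalently, the family `(x n)` is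
not summable), is `𝔠`-lineable in `X ^ ℕ`.  (Convergence of the net `F ↦ ∑_{n ∈ F} x n`
to `s` is exactly `HasSum x s`, so divergence of the net is `¬ Summable x`.) -/
theorem statement5 (𝕜 : Type) [RCLike 𝕜] (X : Type u)
    [NormedAddCommGroup X] [NormedSpace 𝕜 X] [Nontrivial X] :
    ∃ W : Submodule 𝕜 (ℕ → X),
      Module.rank 𝕜 ↥W = Cardinal.lift.{u} Cardinal.continuum ∧
      ∀ x ∈ W, x ≠ 0 →
        (∃ s : X, Filter.Tendsto (fun N : ℕ => ∑ n ∈ Finset.range N, x n)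
          Filter.atTop (nhds s)) ∧
        ¬ Summable x := by
  obtain ⟨e, he⟩ := exists_ne (0 : X)
  let I := Set.Ioo (0 : ℝ) 1
  have hp1 : ∀ t : I, (t : ℝ) ≤ 1 := fun t => t.2.2.le
  refine ⟨Submodule.span 𝕜 (Set.range fun t : I => altPowSeq 𝕜 e t), ?_, fun x hx hx0 => ⟨?_, ?_⟩⟩
  · have hv := linearIndependent_altPowSeq (𝕜 := 𝕜) he Subtype.val_injective hp1
    have hcard := Cardinal.mk_range_eq_of_injective hv.injective
    rw [Cardinal.lift_uzero, Cardinal.mk_Ioo_real zero_lt_one] at hcard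
    rw [rank_span hv, hcard, Cardinal.lift_continuum, Cardinal.lift_continuum]
  · have hconv : x ∈ convergentSeries 𝕜 X := by
      refine Submodule.span_le.2 ?_ hx
      rintro _ ⟨t, rfl⟩
      exact altPowSeq_mem_convergentSeries e t.2.1
    exact hconv
  · obtain ⟨c, rfl⟩ := Finsupp.mem_span_range_iff_exists_finsupp.1 hx
    refine not_summable_finsupp_sum_smul_altPowSeq he Subtype.val_injective hp1 ?_
    rintro rfl
    exact hx0 Finsupp.sum_zero_index
end

section
/- (Fichtenholz–Kantorovich–Hausdorff) Let Γ be a set of infinite cardinality κ. Then there exists a family 𝒴 of subsets of Γ that is independent and has cardinality 2^κ. -/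
open Cardinal

universe u

/-- A family `𝒴` of subsets of `Γ` is independent if for any finitely many pairwise distinct
members `Y₁, …, Yₙ ∈ 𝒴` and any choice of signs `ε : Fin n → Bool`, the intersection
`Y₁^{ε₁} ∩ ⋯ ∩ Yₙ^{εₙ}` is nonempty, where `Y^1 = Y` and `Y^0 = Γ \ Y`. -/
def IsIndependentFamily {Γ : Type u} (𝒴 : Set (Set Γ)) : Prop :=
  ∀ (n : ℕ) (Y : Fin n → Set Γ), (∀ i, Y i ∈ 𝒴) → Function.Injective Y →
    ∀ ε : Fin n → Bool, (⋂ i, if ε i then Y i else (Y i)ᶜ).Nonempty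

/-- The FKH family on `Finset Γ × Finset (Finset Γ)`. -/
def fkh {Γ : Type u} (A : Set Γ) : Set (Finset Γ × Finset (Finset Γ)) :=
  {p | ∃ s ∈ p.2, (↑s : Set Γ) = A ∩ ↑p.1}

lemma fkh_injective {Γ : Type u} : Function.Injective (fkh (Γ := Γ)) := by
  intro A B hAB
  ext γ
  constructor
  all_goals
    intro hγ
    have key : ({γ}, ({ {γ} } : Finset (Finset Γ))) ∈ fkh A ↔
        ({γ}, ({ {γ} } : Finset (Finset Γ))) ∈ fkh B := by rw [hAB]
  · have h1 : ({γ}, ({ {γ} } : Finset (Finset Γ))) ∈ fkh A := by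
      refine ⟨{γ}, Finset.mem_singleton_self _, ?_⟩
      simp only [Finset.coe_singleton]
      exact (Set.inter_eq_right.mpr (Set.singleton_subset_iff.mpr hγ)).symm
    obtain ⟨s, hs, hcoe⟩ := key.mp h1
    simp at hs; subst hs
    have : γ ∈ (↑({γ} : Finset Γ) : Set Γ) := by simp
    rw [hcoe] at this
    exact this.1
  · have h1 : ({γ}, ({ {γ} } : Finset (Finset Γ))) ∈ fkh B := by
      refine ⟨{γ}, Finset.mem_singleton_self _, ?_⟩
      simp only [Finset.coe_singleton]
      exact (Set.inter_eq_right.mpr (Set.singleton_subset_iff.mpr hγ)).symm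
    obtain ⟨s, hs, hcoe⟩ := key.mpr h1
    simp at hs; subst hs
    have : γ ∈ (↑({γ} : Finset Γ) : Set Γ) := by simp
    rw [hcoe] at this
    exact this.1

lemma fkh_indep {Γ : Type u} [Nonempty Γ] (n : ℕ) (A : Fin n → Set Γ)
    (hA : ∀ i j, i ≠ j → A i ≠ A j) (ε : Fin n → Bool) :
    (⋂ i, if ε i then fkh (A i) else (fkh (A i))ᶜ).Nonempty := by
  classical
  -- choose separating points
  have hsep : ∀ i j : Fin n, i ≠ j → ∃ γ, ¬(γ ∈ A i ↔ γ ∈ A j) := by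
    intro i j hij
    by_contra h
    push_neg at h
    exact hA i j hij (Set.ext h)
  choose! γfun hγfun using fun i j (h : i ≠ j) => hsep i j h
  let F : Finset Γ := Finset.image (fun p : Fin n × Fin n => γfun p.1 p.2) Finset.univ
  have hmemF : ∀ i j : Fin n, i ≠ j → γfun i j ∈ F := by
    intro i j _
    exact Finset.mem_image.mpr ⟨(i, j), Finset.mem_univ _, rfl⟩
  -- traces
  let s : Fin n → Finset Γ := fun i => F.filter (· ∈ A i)
  have hscoe : ∀ i, (↑(s i) : Set Γ) = A i ∩ ↑F := by
    intro i; ext x; simp [s, and_comm]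
  have hsdist : ∀ i j, i ≠ j → s i ≠ s j := by
    intro i j hij hss
    have h1 := hγfun i j hij
    have hm := hmemF i j hij
    have : γfun i j ∈ A i ∩ ↑F ↔ γfun i j ∈ A j ∩ ↑F := by
      rw [← hscoe, ← hscoe, hss]
    simp only [Set.mem_inter_iff, Finset.mem_coe, hm, and_true] at this
    exact h1 this
  let 𝔽 : Finset (Finset Γ) := Finset.image s (Finset.univ.filter (fun i => ε i = true))
  refine ⟨(F, 𝔽), ?_⟩
  rw [Set.mem_iInter]
  intro i
  by_cases hε : ε i = true
  · simp only [hε, if_true]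
    exact ⟨s i, Finset.mem_image.mpr ⟨i, by simp [hε], rfl⟩, hscoe i⟩
  · simp only [hε, if_false]
    rintro ⟨t, ht, hcoe⟩
    obtain ⟨j, hj, rfl⟩ := Finset.mem_image.mp ht
    simp only [Finset.mem_filter] at hj
    have hij : i ≠ j := by rintro rfl; exact hε hj.2
    apply hsdist j i (Ne.symm hij)
    apply Finset.coe_injective
    rw [hcoe, hscoe i]

/-- **Fichtenholz–Kantorovich–Hausdorff.** Let `Γ` be a set of infinite
cardinality `κ`.  Then there is an independent family `𝒴` of subsets of `Γ` with
`card 𝒴 = 2 ^ κ`. -/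
theorem statement6 (Γ : Type u) (κ : Cardinal.{u}) (hκ : ℵ₀ ≤ κ)
    (hΓ : Cardinal.mk Γ = κ) :
    ∃ 𝒴 : Set (Set Γ), Cardinal.mk 𝒴 = 2 ^ κ ∧ IsIndependentFamily 𝒴 := by
  classical
  have hinf : Infinite Γ := Cardinal.infinite_iff.mpr (hΓ ▸ hκ)
  have hne : Nonempty Γ := inferInstance
  -- the double-finset type has the same cardinality
  have hΔ : Cardinal.mk (Finset Γ × Finset (Finset Γ)) = Cardinal.mk Γ := by
    have h1 : Cardinal.mk (Finset Γ) = Cardinal.mk Γ := Cardinal.mk_finset_of_infinite Γ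
    have hinf2 : Infinite (Finset Γ) := Cardinal.infinite_iff.mpr (h1 ▸ (hΓ ▸ hκ))
    have h2 : Cardinal.mk (Finset (Finset Γ)) = Cardinal.mk (Finset Γ) :=
      Cardinal.mk_finset_of_infinite (Finset Γ)
    rw [Cardinal.mk_prod, Cardinal.lift_id, Cardinal.lift_id, h1, h2, h1,
      Cardinal.mul_eq_self (hΓ ▸ hκ)]
  obtain ⟨e⟩ := Cardinal.eq.mp hΔ.symm
  let f : Set Γ → Set Γ := fun A => e ⁻¹' (fkh A)
  have hfinj : Function.Injective f := fun A B h =>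
    fkh_injective ((Set.preimage_injective.mpr e.surjective) h)
  refine ⟨Set.range f, ?_, ?_⟩
  · rw [Cardinal.mk_range_eq f hfinj, Cardinal.mk_set, hΓ]
  · intro n Y hY hYinj ε
    choose A hA using fun i => hY i
    have hAdist : ∀ i j, i ≠ j → A i ≠ A j := by
      intro i j hij hAeq
      exact hij (hYinj (by rw [← hA i, ← hA j, hAeq]))
    obtain ⟨x, hx⟩ := fkh_indep n A hAdist ε
    refine ⟨e.symm x, ?_⟩
    rw [Set.mem_iInter]
    intro i
    rw [Set.mem_iInter] at hx
    have := hx i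
    rw [← hA i]
    by_cases hε : ε i = true
    · simp only [hε, if_true] at this ⊢
      simpa [f] using this
    · simp only [hε, if_false] at this ⊢
      simpa [f] using this
end

section
/- Let κ be an infinite regular cardinal with 2^{<κ} = κ. Then there exists a family 𝒦 of subsets of κ of cardinality 2^κ such that every member of 𝒦 has cardinality κ and any two distinct members K₁, K₂ ∈ 𝒦 are almost disjoint, i.e., card(K₁ ∩ K₂) < κ. -/
open Cardinal Set

universe u

/-!
Tag every `A ⊆ κ` with the set of its traces `(β, A ∩ β)`, `β < κ`. Each such set of traces
has size `κ`, and two of them share only traces below the first ordinal at which `A` and `B`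
differ, so fewer than `κ`. As `2 ^ {<κ} = κ`, there are exactly `κ` possible traces, so the
`2 ^ κ` sets of traces live in a set of size `κ`.
-/

section Trace

variable {α : Type u} [LinearOrder α]

def traceBelow (A : Set α) (β : α) : Σ β : α, Set (Iio β) :=
  ⟨β, (↑) ⁻¹' A⟩

theorem traceBelow_eq_traceBelow_iff {A B : Set α} {β β' : α} :
    traceBelow A β = traceBelow B β' ↔ β = β' ∧ ∀ x < β, (x ∈ A ↔ x ∈ B) := by
  constructor
  · intro h
    obtain ⟨rfl, hA⟩ := Sigma.mk.inj_iff.mp h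
    exact ⟨rfl, fun x hx => by simpa using congrArg (⟨x, hx⟩ ∈ ·) (eq_of_heq hA)⟩
  · rintro ⟨rfl, h⟩
    exact congrArg (Sigma.mk β) (Set.ext fun x => h x x.2)

theorem traceBelow_injective (A : Set α) : Function.Injective (traceBelow A) :=
  fun _ _ h => (traceBelow_eq_traceBelow_iff.mp h).1

theorem range_traceBelow_inter_subset {A B : Set α} {x y : α} (hAB : ¬(x ∈ A ↔ x ∈ B))
    (hxy : x < y) : range (traceBelow A) ∩ range (traceBelow B) ⊆ traceBelow A '' Iio y := by
  rintro _ ⟨⟨β, rfl⟩, β', hβ'⟩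
  obtain ⟨rfl, hagree⟩ := traceBelow_eq_traceBelow_iff.mp hβ'.symm
  exact ⟨β, not_le.mp fun hyβ => hAB (hagree x (hxy.trans_le hyβ)), rfl⟩

variable [NoMaxOrder α]

theorem range_traceBelow_injective : Function.Injective fun A : Set α => range (traceBelow A) := by
  intro A B (h : range _ = range _)
  by_contra hAB
  obtain ⟨x, hx⟩ : ∃ x, ¬(x ∈ A ↔ x ∈ B) := by simpa [Set.ext_iff] using hAB
  obtain ⟨y, hxy⟩ := exists_gt x
  have hy : traceBelow A y ∈ range (traceBelow A) ∩ range (traceBelow B) :=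
    ⟨mem_range_self y, h ▸ mem_range_self y⟩
  obtain ⟨β, hβy, hβ⟩ := range_traceBelow_inter_subset hx hxy hy
  exact (traceBelow_injective A hβ ▸ hβy : y < y).false

theorem exists_range_traceBelow_inter_subset {A B : Set α} (hAB : A ≠ B) :
    ∃ y, range (traceBelow A) ∩ range (traceBelow B) ⊆ traceBelow A '' Iio y := by
  obtain ⟨x, hx⟩ : ∃ x, ¬(x ∈ A ↔ x ∈ B) := by simpa [Set.ext_iff] using hAB
  obtain ⟨y, hxy⟩ := exists_gt x
  exact ⟨y, range_traceBelow_inter_subset hx hxy⟩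

end Trace

theorem mk_Iio_toType_ord {κ : Cardinal.{u}} (β : κ.ord.ToType) : #(Iio β) < κ := by
  simpa using mk_Iio_lt β

theorem mk_sigma_set_Iio_ord_toType {κ : Cardinal.{u}} (hκ : ℵ₀ ≤ κ) (hpow : 2 ^< κ = κ) :
    #(Σ β : κ.ord.ToType, Set (Iio β)) = κ := by
  refine le_antisymm ?_ ?_
  · calc #(Σ β : κ.ord.ToType, Set (Iio β))
        ≤ sum fun _ : κ.ord.ToType => κ := by
          rw [mk_sigma]
          refine sum_le_sum _ _ fun β => ?_
          rw [mk_set]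
          exact (le_powerlt 2 (mk_Iio_toType_ord β)).trans_eq hpow
      _ = κ := by rw [sum_const', mk_ord_toType, mul_eq_self hκ]
  · calc κ = #κ.ord.ToType := (mk_ord_toType κ).symm
      _ ≤ #(Σ β : κ.ord.ToType, Set (Iio β)) :=
        mk_le_of_injective (f := fun β => ⟨β, ∅⟩) fun _ _ h => congrArg Sigma.fst h

/-- Assume moreover `2 ^ {<κ} = κ`. Let `κ` be an infinite regular cardinal.  Then there is a family `𝒦` of
subsets of `κ` (formalized via the canonical type `κ.ord.ToType` of ordinals below `κ`) of
cardinality `2 ^ κ` such that every member of `𝒦` has cardinality `κ` and any two distinct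
members are almost disjoint: their intersection has cardinality `< κ`. -/
theorem statement8 (κ : Cardinal.{u}) (hreg : κ.IsRegular) (hpow : (2 : Cardinal.{u}) ^< κ = κ) :
    ∃ 𝒦 : Set (Set κ.ord.ToType),
      Cardinal.mk 𝒦 = 2 ^ κ ∧
      (∀ K ∈ 𝒦, Cardinal.mk K = κ) ∧
      (∀ K₁ ∈ 𝒦, ∀ K₂ ∈ 𝒦, K₁ ≠ K₂ → Cardinal.mk ↥(K₁ ∩ K₂) < κ) := by
  have hκ := hreg.aleph0_le
  have : NoMaxOrder κ.ord.ToType := noMaxOrder hκ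
  obtain ⟨e⟩ : Nonempty ((Σ β : κ.ord.ToType, Set (Iio β)) ≃ κ.ord.ToType) :=
    Cardinal.eq.mp ((mk_sigma_set_Iio_ord_toType hκ hpow).trans (mk_ord_toType κ).symm)
  let K (A : Set κ.ord.ToType) : Set κ.ord.ToType := e '' range (traceBelow A)
  have hK : Function.Injective K := (image_injective.2 e.injective).comp range_traceBelow_injective
  refine ⟨range K, ?_, ?_, ?_⟩
  · rw [mk_range_eq K hK, mk_set, mk_ord_toType]
  · rintro _ ⟨A, rfl⟩
    rw [mk_image_eq e.injective, mk_range_eq _ (traceBelow_injective A), mk_ord_toType]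
  · rintro _ ⟨A, rfl⟩ _ ⟨B, rfl⟩ hne
    obtain ⟨y, hy⟩ := exists_range_traceBelow_inter_subset fun h => hne (congrArg K h)
    calc #↥(K A ∩ K B) = #↥(range (traceBelow A) ∩ range (traceBelow B)) := by
          rw [← image_inter e.injective, mk_image_eq e.injective]
      _ ≤ #(traceBelow A '' Iio y) := mk_le_mk_of_subset hy
      _ ≤ #(Iio y) := mk_image_le
      _ < κ := mk_Iio_toType_ord y
end
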